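/- arXiv:2301.06977 — 2 statements merged into one kernel-verified Lean document; each statement's English description precedes it below -/
import Mathlib

section
/- Let G = (X ∪ Y, E) be X-semi-bipartite with Y finite, and suppose for every S ⊆ Y, |S| ≤ |N_G(S) ∩ X|. Then every maximum cardinality matching of G is Y-perfect. -/
/-!
Hall's condition gives an injection `f` from `Y` into `X` along edges. If a maximum matching `M`
missed some `y₀ ∈ Y`, let `A` be the set of vertices reachable from `y₀` by repeatedly applying
`f` and then moving to the `M`-partner. As `X` is independent, `A ⊆ Y`, and `A ∪ f(A)` is closed
under `M`-adjacency. Replacing `M` on `A ∪ f(A)` by the edges `a — f a` therefore gives a matching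
that covers strictly more vertices, hence has more edges.
-/

open Relation

namespace SimpleGraph.Subgraph

variable {V : Type*} {G : SimpleGraph V} {M N : G.Subgraph}

lemma IsMatching.ncard_verts_eq_two_mul_ncard_edgeSet [Finite V] (hM : M.IsMatching) :
    M.verts.ncard = 2 * M.edgeSet.ncard := by
  have hfiber (e : M.edgeSet) : Nat.card {v // hM.toEdge v = e} = 2 := by
    change Nat.card (hM.toEdge ⁻¹' {e}) = 2
    obtain ⟨e, he⟩ := e
    induction e using Sym2.inductionOn with
    | _ u v =>
      rw [hM.toEdge_preimage_singleton he, Nat.card_coe_set_eq, Set.ncard_pair]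
      exact fun h => he.ne (congrArg Subtype.val h)
  have := Fintype.ofFinite M.edgeSet
  rw [← Nat.card_coe_set_eq, ← Nat.card_coe_set_eq,
    ← Nat.card_congr (Equiv.sigmaFiberEquiv hM.toEdge), Nat.card_sigma]
  simp [hfiber, Nat.card_eq_fintype_card, mul_comm]

lemma IsMatching.ncard_edgeSet_lt_of_verts_ssubset [Finite V] (hM : M.IsMatching)
    (hN : N.IsMatching) (h : M.verts ⊂ N.verts) : M.edgeSet.ncard < N.edgeSet.ncard := by
  have := Set.ncard_lt_ncard h
  rw [hM.ncard_verts_eq_two_mul_ncard_edgeSet, hN.ncard_verts_eq_two_mul_ncard_edgeSet] at this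
  omega

lemma IsMatching.deleteVerts {s : Set V} (hM : M.IsMatching)
    (hs : ∀ v ∈ s, ∀ w, M.Adj v w → w ∈ s) : (M.deleteVerts s).IsMatching := by
  rintro v ⟨hvM, hvs⟩
  obtain ⟨w, hvw, huniq⟩ := hM hvM
  refine ⟨w, deleteVerts_adj.2 ⟨hvM, hvs, hvw.snd_mem, fun hws => hvs (hs w hws v hvw.symm), hvw⟩,
    fun u hvu => huniq u (deleteVerts_adj.1 hvu).2.2.2.2⟩

lemma IsMatching.deleteVerts_sup (hM : M.IsMatching) (hN : N.IsMatching)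
    (hclosed : ∀ v ∈ N.verts, ∀ w, M.Adj v w → w ∈ N.verts) :
    (M.deleteVerts N.verts ⊔ N).IsMatching :=
  (hM.deleteVerts hclosed).sup hN <| Set.disjoint_of_subset (support_subset_verts _)
    (support_subset_verts _) (by simpa using Set.disjoint_sdiff_left)

lemma IsMatching.exists_isMatching_verts_ssuperset {f : V → V} {A : Set V} (hM : M.IsMatching)
    (hinj : A.InjOn f) (hadj : ∀ a ∈ A, G.Adj a (f a)) (hdisj : Disjoint A (f '' A))
    (hadj_image : ∀ a ∈ A, ∀ w, M.Adj (f a) w → w ∈ A)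
    (hadj_mem : ∀ a ∈ A, ∀ w, M.Adj a w → w ∈ f '' A) (hfree : ¬ A ⊆ M.verts) :
    ∃ M' : G.Subgraph, M'.IsMatching ∧ M.verts ⊂ M'.verts := by
  obtain ⟨N, hNverts, hN⟩ := IsMatching.exists_of_disjoint_sets_of_equiv hdisj
    (Equiv.Set.imageOfInjOn f A hinj) fun a => hadj a a.2
  have hclosed : ∀ v ∈ N.verts, ∀ w, M.Adj v w → w ∈ N.verts := by
    simp only [hNverts]
    rintro v (hv | ⟨a, ha, rfl⟩) w hvw
    · exact Or.inr (hadj_mem v hv w hvw)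
    · exact Or.inl (hadj_image a ha w hvw)
  refine ⟨_, hM.deleteVerts_sup hN hclosed, ?_⟩
  rw [verts_sup, deleteVerts_verts, Set.sdiff_union_self, hNverts]
  exact Set.subset_union_left.ssubset_of_not_subset fun h =>
    hfree (Set.subset_union_left.trans (Set.subset_union_right.trans h))

lemma IsMatching.adj_mem_image_of_reflTransGen {f : V → V} {y₀ a w : V} (hM : M.IsMatching)
    (hy₀ : y₀ ∉ M.verts) (ha : ReflTransGen (fun b c => M.Adj (f b) c) y₀ a) (haw : M.Adj a w) :
    w ∈ f '' {b | ReflTransGen (fun b c => M.Adj (f b) c) y₀ b} := by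
  obtain rfl | ⟨c, hc, hca⟩ := ha.cases_tail
  · exact absurd haw.fst_mem hy₀
  · exact ⟨c, hc, hM.eq_of_adj_left hca.symm haw⟩

end SimpleGraph.Subgraph

lemma SimpleGraph.exists_injOn_adj_of_hall {V : Type*} [Fintype V] (G : SimpleGraph V)
    (X Y : Set V) (hHall : ∀ S ⊆ Y, S.ncard ≤ ({w | ∃ u ∈ S, G.Adj u w} ∩ X).ncard) :
    ∃ f : V → V, Y.InjOn f ∧ ∀ y ∈ Y, G.Adj y (f y) ∧ f y ∈ X := by
  classical
  obtain ⟨f, hinj, hf⟩ :=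
    (Fintype.all_card_le_filter_rel_iff_exists_injective fun (y : Y) w => G.Adj y w ∧ w ∈ X).1
      fun A => by
        have h := hHall (Subtype.val '' (A : Set Y)) (by simp)
        rw [Set.ncard_image_of_injective _ Subtype.val_injective, Set.ncard_coe_finset] at h
        convert h using 1
        rw [← Set.ncard_coe_finset]
        congr 1
        ext w
        aesop
  refine ⟨fun v => if h : v ∈ Y then f ⟨v, h⟩ else v, fun a ha b hb hab => ?_, fun y hy => ?_⟩
  · simpa [ha, hb] using congrArg Subtype.val (hinj (by simpa [ha, hb] using hab))
  · simpa [hy] using hf ⟨y, hy⟩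

/-- Under Hall's condition, every maximum cardinality matching is `Y`-perfect. -/
theorem semi_bipartite_hall_maximum_matching_perfect {V : Type*} [Fintype V] (G : SimpleGraph V)
    (X Y : Set V) (hdisj : Disjoint X Y) (hcover : X ∪ Y = Set.univ)
    (hind : ∀ a ∈ X, ∀ b ∈ X, ¬ G.Adj a b)
    (hHall : ∀ S ⊆ Y, S.ncard ≤ ({w | ∃ u ∈ S, G.Adj u w} ∩ X).ncard)
    (M : G.Subgraph) (hM : M.IsMatching)
    (hmax : ∀ M' : G.Subgraph, M'.IsMatching → M'.edgeSet.ncard ≤ M.edgeSet.ncard) :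
    Y ⊆ M.verts := by
  obtain ⟨f, hinj, hf⟩ := G.exists_injOn_adj_of_hall X Y hHall
  intro y₀ hy₀
  by_contra hy₀M
  set A := {y | ReflTransGen (fun a b => M.Adj (f a) b) y₀ y}
  have hAY : A ⊆ Y := fun y hy => by
    induction hy with
    | refl => exact hy₀
    | @tail b c _ hbc hb =>
      have hc : c ∈ X ∪ Y := hcover ▸ Set.mem_univ c
      exact hc.resolve_left fun hcX => hind _ (hf b hb).2 c hcX hbc.adj_sub
  obtain ⟨M', hM', hlt⟩ := hM.exists_isMatching_verts_ssuperset (hinj.mono hAY)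
    (fun a ha => (hf a (hAY ha)).1)
    (hdisj.symm.mono hAY (Set.image_subset_iff.2 fun a ha => (hf a (hAY ha)).2))
    (fun a ha w hw => ha.tail hw) (fun a ha w hw => hM.adj_mem_image_of_reflTransGen hy₀M ha hw)
    (fun h => hy₀M (h ReflTransGen.refl))
  exact (hM.ncard_edgeSet_lt_of_verts_ssubset hM' hlt).not_ge (hmax M' hM')
end

section
/- Under sound accusations, if a maximum matching M on the accusation graph satisfies |V_M| = 2|B|, then M is B-perfect, i.e., every Byzantine robot is matched and hence blocked. -/
/-- Under sound accusations, if a maximum matching `M` on the accusation graph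
satisfies `|V_M| = 2|B|`, then `M` is `B`-perfect: every Byzantine robot is matched. -/
theorem accusation_maximum_matching_perfect {V : Type*} [Fintype V] (C B : Set V)
    (hB : B = Cᶜ) (Acc : V → V → Prop)
    (hirrefl : ∀ i j, Acc i j → i ≠ j)
    (hsound : ∀ i j, Acc i j → i ∈ C → j ∈ B)
    (G : SimpleGraph V) (hG : ∀ i j, G.Adj i j ↔ (Acc i j ∨ Acc j i))
    (M : G.Subgraph) (hM : M.IsMatching)
    (hmax : ∀ M' : G.Subgraph, M'.IsMatching → M'.edgeSet.ncard ≤ M.edgeSet.ncard)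
    (hcard : M.verts.ncard = 2 * B.ncard) :
    B ⊆ M.verts := by
  classical
  -- Any edge incident to a cooperative vertex ends in a Byzantine vertex.
  have hsemi : ∀ v w, M.Adj v w → v ∈ C → w ∈ B := by
    intro v w hvw hvC
    have hadj : G.Adj v w := M.adj_sub hvw
    rcases (hG v w).mp hadj with h | h
    · exact hsound v w h hvC
    · by_cases hwC : w ∈ C
      · exact absurd (hsound w v h hwC) (by simp [hB, hvC])
      · simpa [hB] using hwC
  -- partner function
  set f : V → V := fun v => if h : v ∈ M.verts then (hM h).choose else v with hf
  have hfadj : ∀ v (h : v ∈ M.verts), M.Adj v (f v) := by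
    intro v h
    simp only [hf, dif_pos h]
    exact (hM h).choose_spec.1
  have hinj : Set.InjOn f (M.verts ∩ C) := by
    intro a ha b hb hab
    have ha' := hfadj a ha.1
    have hb' := hfadj b hb.1
    rw [hab] at ha'
    have hfb : f b ∈ M.verts := M.edge_vert ha'.symm
    exact (hM hfb).unique ha'.symm hb'.symm
  have hmaps : Set.MapsTo f (M.verts ∩ C) (M.verts ∩ B) := by
    intro v hv
    have h := hfadj v hv.1
    exact ⟨M.edge_vert h.symm, hsemi v _ h hv.2⟩
  have h1 : (M.verts ∩ C).ncard ≤ (M.verts ∩ B).ncard :=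
    Set.ncard_le_ncard_of_injOn f hmaps hinj (Set.toFinite _)
  have hdisj : Disjoint (M.verts ∩ C) (M.verts ∩ B) := by
    have : Disjoint C B := by rw [hB]; exact disjoint_compl_right
    exact this.mono Set.inter_subset_right Set.inter_subset_right
  have hsplit : M.verts.ncard = (M.verts ∩ C).ncard + (M.verts ∩ B).ncard := by
    rw [← Set.ncard_union_eq hdisj (Set.toFinite _) (Set.toFinite _)]
    congr 1
    rw [← Set.inter_union_distrib_left, hB, Set.union_compl_self, Set.inter_univ]
  have h2 : (M.verts ∩ B).ncard ≤ B.ncard :=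
    Set.ncard_le_ncard Set.inter_subset_right (Set.toFinite _)
  have heq : (M.verts ∩ B).ncard = B.ncard := by omega
  have : M.verts ∩ B = B :=
    Set.eq_of_subset_of_ncard_le Set.inter_subset_right (le_of_eq heq.symm) (Set.toFinite _)
  intro b hb
  rw [← this] at hb
  exact hb.1
end
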